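/- arXiv:math/0506499 — 4 statements merged into one kernel-verified Lean document; each statement's English description precedes it below -/
import Mathlib

section
/- If β and γ are homogeneous elements of l̂ × l̂ of degrees n₁ and n₂ respectively, with norms C_{n₁}(β) and C_{n₂}(γ), then the new bracket [β,γ] is homogeneous of degree n = n₁ + n₂ and satisfies C_n([β,γ]) ≤ (n+1) · C_{n₁}(β) · C_{n₂}(γ). -/
noncomputable section

/-- The free Lie algebra `l` on two generators `x = of true`, `y = of false`. -/
abbrev FL : Type := FreeLieAlgebra ℝ Bool

/-- `IsLieWord n u`: `u` is a Lie word of length `n`, i.e. an iterated bracket of `n`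
letters from `{x,y}`. -/
inductive IsLieWord : ℕ → FL → Prop
  | of (b : Bool) : IsLieWord 1 (FreeLieAlgebra.of ℝ b)
  | lie {m n : ℕ} {u v : FL} : IsLieWord m u → IsLieWord n v → IsLieWord (m + n) ⁅u, v⁆

/-- `l` is homogeneous of degree `n`. -/
def Homog (n : ℕ) (l : FL) : Prop := l ∈ Submodule.span ℝ {u : FL | IsLieWord n u}

/-- The norm `C_n(l)`: the infimum of `Σ_i |c_i|` over presentations `l = Σ_i c_i l_i`
with the `l_i` Lie words of length `n`. -/
def Cn (n : ℕ) (l : FL) : ℝ :=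
  sInf {s : ℝ | ∃ (m : ℕ) (c : Fin m → ℝ) (w : Fin m → FL),
    (∀ i, IsLieWord n (w i)) ∧ l = ∑ i, c i • w i ∧ s = ∑ i, |c i|}

/-- Homogeneity for pairs. -/
def HomogP (n : ℕ) (p : FL × FL) : Prop := Homog n p.1 ∧ Homog n p.2

/-- `C_n` for pairs: the maximum over the two components. -/
def CnP (n : ℕ) (p : FL × FL) : ℝ := max (Cn n p.1) (Cn n p.2)

lemma sum_lie' {ι : Type} (s : Finset ι) (f : ι → FL) (x : FL) :
    ⁅∑ i ∈ s, f i, x⁆ = ∑ i ∈ s, ⁅f i, x⁆ := by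
  induction s using Finset.cons_induction with
  | empty => simp
  | cons i S hi ih => rw [Finset.sum_cons, Finset.sum_cons, add_lie, ih]

lemma lie_sum' {ι : Type} (s : Finset ι) (x : FL) (f : ι → FL) :
    ⁅x, ∑ i ∈ s, f i⁆ = ∑ i ∈ s, ⁅x, f i⁆ := by
  induction s using Finset.cons_induction with
  | empty => simp
  | cons i S hi ih => rw [Finset.sum_cons, Finset.sum_cons, lie_add, ih]

def HasRep (n : ℕ) (l : FL) (s : ℝ) : Prop :=
  ∃ (m : ℕ) (c : Fin m → ℝ) (w : Fin m → FL),
    (∀ i, IsLieWord n (w i)) ∧ l = ∑ i, c i • w i ∧ s = ∑ i, |c i|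

lemma cn_eq (n : ℕ) (l : FL) : Cn n l = sInf {s | HasRep n l s} := rfl

lemma HasRep.nonneg {n l s} (h : HasRep n l s) : 0 ≤ s := by
  obtain ⟨m, c, w, -, -, rfl⟩ := h
  exact Finset.sum_nonneg fun i _ => abs_nonneg _

lemma hasRep_fintype {ι : Type} [Fintype ι] {n : ℕ} (c : ι → ℝ) (w : ι → FL)
    (h : ∀ i, IsLieWord n (w i)) : HasRep n (∑ i, c i • w i) (∑ i, |c i|) := by
  let e := (Fintype.equivFin ι).symm
  refine ⟨Fintype.card ι, c ∘ e, w ∘ e, fun i => h _, ?_, ?_⟩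
  · exact (Fintype.sum_equiv e _ _ fun i => rfl).symm
  · exact (Fintype.sum_equiv e _ _ fun i => rfl).symm

lemma hasRep_zero (n : ℕ) : HasRep n 0 0 :=
  ⟨0, ![], ![], fun i => i.elim0, by simp, by simp⟩

lemma HasRep.add {n a b s t} (ha : HasRep n a s) (hb : HasRep n b t) :
    HasRep n (a + b) (s + t) := by
  obtain ⟨m, c, w, hw, rfl, rfl⟩ := ha
  obtain ⟨m', c', w', hw', rfl, rfl⟩ := hb
  have := hasRep_fintype (ι := Fin m ⊕ Fin m') (Sum.elim c c') (Sum.elim w w')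
    (fun i => by rcases i with i | i
                 · exact hw i
                 · exact hw' i)
  simpa [Fintype.sum_sum_type] using this

lemma HasRep.smul {n l s} (r : ℝ) (h : HasRep n l s) : HasRep n (r • l) (|r| * s) := by
  obtain ⟨m, c, w, hw, rfl, rfl⟩ := h
  refine ⟨m, fun i => r * c i, w, hw, ?_, ?_⟩
  · rw [Finset.smul_sum]; simp [smul_smul]
  · rw [Finset.mul_sum]; simp [abs_mul]

lemma HasRep.lie {n₁ n₂ a b s t} (ha : HasRep n₁ a s) (hb : HasRep n₂ b t) :
    HasRep (n₁ + n₂) ⁅a, b⁆ (s * t) := by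
  obtain ⟨m, c, w, hw, rfl, rfl⟩ := ha
  obtain ⟨m', c', w', hw', rfl, rfl⟩ := hb
  have key : ⁅∑ i, c i • w i, ∑ j, c' j • w' j⁆
      = ∑ p : Fin m × Fin m', (c p.1 * c' p.2) • ⁅w p.1, w' p.2⁆ := by
    rw [sum_lie', Fintype.sum_prod_type]
    refine Finset.sum_congr rfl fun i _ => ?_
    rw [lie_sum']
    refine Finset.sum_congr rfl fun j _ => ?_
    rw [smul_lie, lie_smul, smul_smul]
  rw [key]
  have hsum : (∑ i, |c i|) * ∑ j, |c' j| = ∑ p : Fin m × Fin m', |c p.1 * c' p.2| := by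
    rw [Finset.sum_mul_sum, Fintype.sum_prod_type]
    simp [abs_mul]
  rw [hsum]
  exact hasRep_fintype _ _ fun p => (hw p.1).lie (hw' p.2)

lemma hasRep_word {n w} (h : IsLieWord n w) : HasRep n w 1 :=
  ⟨1, ![1], ![w], fun i => by fin_cases i <;> simpa, by simp, by simp⟩

lemma hasRep_finsum {ι : Type} [Fintype ι] {n : ℕ} (f : ι → FL) (r : ι → ℝ)
    (h : ∀ i, HasRep n (f i) (r i)) : HasRep n (∑ i, f i) (∑ i, r i) := by
  classical
  induction (Finset.univ : Finset ι) using Finset.cons_induction with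
  | empty => simpa using hasRep_zero n
  | cons i S hi ih => rw [Finset.sum_cons, Finset.sum_cons]; exact (h i).add ih

lemma homog_of_hasRep {n l s} (h : HasRep n l s) : Homog n l := by
  obtain ⟨m, c, w, hw, rfl, -⟩ := h
  exact Submodule.sum_mem _ fun i _ =>
    Submodule.smul_mem _ _ (Submodule.subset_span (hw i))

lemma exists_hasRep {n l} (h : Homog n l) : ∃ s, HasRep n l s := by
  rw [Homog, Submodule.mem_span_set'] at h
  obtain ⟨m, f, g, hg⟩ := h
  exact ⟨∑ i, |f i|, m, f, fun i => (g i : FL), fun i => (g i).2, hg.symm, rfl⟩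

lemma bddBelow_rep (n : ℕ) (l : FL) : BddBelow {s | HasRep n l s} :=
  ⟨0, fun x hx => HasRep.nonneg hx⟩

lemma cn_le_of_hasRep {n l s} (h : HasRep n l s) : Cn n l ≤ s := by
  rw [cn_eq]
  exact csInf_le (bddBelow_rep n l) h

lemma cn_nonneg (n : ℕ) (l : FL) : 0 ≤ Cn n l :=
  Real.sInf_nonneg fun x hx => HasRep.nonneg hx

lemma exists_hasRep_lt {n l r} (h : Homog n l) (hr : Cn n l < r) :
    ∃ s < r, HasRep n l s := by
  obtain ⟨s₀, hs₀⟩ := exists_hasRep h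
  rw [cn_eq] at hr
  obtain ⟨s, hs, hsr⟩ := (csInf_lt_iff (bddBelow_rep n l) ⟨s₀, hs₀⟩).1 hr
  exact ⟨s, hsr, hs⟩

lemma hasRep_Lb_word (Lb : FL × FL → LieDerivation ℝ FL FL)
    (hLbx : ∀ β : FL × FL, Lb β (FreeLieAlgebra.of ℝ true) = ⁅β.1, FreeLieAlgebra.of ℝ true⁆)
    (hLby : ∀ β : FL × FL, Lb β (FreeLieAlgebra.of ℝ false) = ⁅β.2, FreeLieAlgebra.of ℝ false⁆)
    (β : FL × FL) (n₁ : ℕ) (s : ℝ) {s₁ s₂ : ℝ}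
    (h1 : HasRep n₁ β.1 s₁) (h2 : HasRep n₁ β.2 s₂) (hs₁ : s₁ ≤ s) (hs₂ : s₂ ≤ s)
    {k : ℕ} {w : FL} (hw : IsLieWord k w) :
    ∃ t, t ≤ (k : ℝ) * s ∧ HasRep (n₁ + k) (Lb β w) t := by
  induction hw with
  | of b =>
    cases b with
    | true =>
      refine ⟨s₁, by simpa using hs₁, ?_⟩
      have := h1.lie (hasRep_word (IsLieWord.of true))
      rw [mul_one] at this
      rw [hLbx]; exact this
    | false =>
      refine ⟨s₂, by simpa using hs₂, ?_⟩
      have := h2.lie (hasRep_word (IsLieWord.of false))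
      rw [mul_one] at this
      rw [hLby]; exact this
  | @lie m n u v hu hv ihu ihv =>
    obtain ⟨t₁, ht₁, hr₁⟩ := ihu
    obtain ⟨t₂, ht₂, hr₂⟩ := ihv
    refine ⟨1 * t₂ + t₁ * 1, ?_, ?_⟩
    · push_cast; nlinarith
    · have e1 : HasRep (m + (n₁ + n)) ⁅u, Lb β v⁆ (1 * t₂) :=
        (hasRep_word hu).lie hr₂
      have e2 : HasRep ((n₁ + m) + n) ⁅Lb β u, v⁆ (t₁ * 1) :=
        hr₁.lie (hasRep_word hv)
      have d1 : m + (n₁ + n) = n₁ + (m + n) := by omega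
      have d2 : (n₁ + m) + n = n₁ + (m + n) := by omega
      rw [d1] at e1; rw [d2] at e2
      have := e1.add e2
      rwa [LieDerivation.apply_lie_eq_add]

lemma hasRep_Lb_homog (Lb : FL × FL → LieDerivation ℝ FL FL)
    (hLbx : ∀ β : FL × FL, Lb β (FreeLieAlgebra.of ℝ true) = ⁅β.1, FreeLieAlgebra.of ℝ true⁆)
    (hLby : ∀ β : FL × FL, Lb β (FreeLieAlgebra.of ℝ false) = ⁅β.2, FreeLieAlgebra.of ℝ false⁆)
    (β : FL × FL) (n₁ : ℕ) (s : ℝ) {s₁ s₂ : ℝ}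
    (h1 : HasRep n₁ β.1 s₁) (h2 : HasRep n₁ β.2 s₂) (hs₁ : s₁ ≤ s) (hs₂ : s₂ ≤ s)
    {k : ℕ} {g : FL} {t : ℝ} (hg : HasRep k g t) :
    ∃ r, r ≤ (k : ℝ) * s * t ∧ HasRep (n₁ + k) (Lb β g) r := by
  obtain ⟨m, c, w, hw, rfl, rfl⟩ := hg
  choose t' ht' hr' using fun i => hasRep_Lb_word Lb hLbx hLby β n₁ s h1 h2 hs₁ hs₂ (hw i)
  have hmap : Lb β (∑ i, c i • w i) = ∑ i, c i • Lb β (w i) := by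
    rw [map_sum]
    exact Finset.sum_congr rfl fun i _ => by rw [map_smul]
  refine ⟨∑ i, |c i| * t' i, ?_, ?_⟩
  · calc ∑ i, |c i| * t' i ≤ ∑ i, |c i| * ((k : ℝ) * s) :=
          Finset.sum_le_sum fun i _ => mul_le_mul_of_nonneg_left (ht' i) (abs_nonneg _)
      _ = (k : ℝ) * s * ∑ i, |c i| := by rw [← Finset.sum_mul]; ring
  · rw [hmap]
    exact hasRep_finsum _ _ fun i => HasRep.smul (c i) (hr' i)

lemma comp_key (Lb : FL × FL → LieDerivation ℝ FL FL)
    (hLbx : ∀ β : FL × FL, Lb β (FreeLieAlgebra.of ℝ true) = ⁅β.1, FreeLieAlgebra.of ℝ true⁆)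
    (hLby : ∀ β : FL × FL, Lb β (FreeLieAlgebra.of ℝ false) = ⁅β.2, FreeLieAlgebra.of ℝ false⁆)
    (n₁ n₂ : ℕ) (β γ : FL × FL) (S T : ℝ)
    {s₁ s₂ t₁ t₂ sb tg : ℝ} {b g : FL}
    (hb1 : HasRep n₁ β.1 s₁) (hb2 : HasRep n₁ β.2 s₂) (hs₁ : s₁ ≤ S) (hs₂ : s₂ ≤ S)
    (hg1 : HasRep n₂ γ.1 t₁) (hg2 : HasRep n₂ γ.2 t₂) (ht₁ : t₁ ≤ T) (ht₂ : t₂ ≤ T)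
    (hb : HasRep n₁ b sb) (hg : HasRep n₂ g tg) (hsb : sb ≤ S) (htg : tg ≤ T) :
    ∃ r, r ≤ ((n₁ : ℝ) + n₂ + 1) * S * T ∧
      HasRep (n₁ + n₂) (Lb β g - Lb γ b + ⁅b, g⁆) r := by
  obtain ⟨r₁, hr₁, hR₁⟩ := hasRep_Lb_homog Lb hLbx hLby β n₁ S hb1 hb2 hs₁ hs₂ hg
  obtain ⟨r₂, hr₂, hR₂⟩ := hasRep_Lb_homog Lb hLbx hLby γ n₂ T hg1 hg2 ht₁ ht₂ hb
  have d : n₂ + n₁ = n₁ + n₂ := Nat.add_comm _ _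
  rw [d] at hR₂
  have hBr : HasRep (n₁ + n₂) ⁅b, g⁆ (sb * tg) := hb.lie hg
  have hS0 : 0 ≤ S := le_trans hb1.nonneg hs₁
  have hT0 : 0 ≤ T := le_trans hg1.nonneg ht₁
  have hsb0 : 0 ≤ sb := hb.nonneg
  have htg0 : 0 ≤ tg := hg.nonneg
  have hr₁0 : 0 ≤ r₁ := hR₁.nonneg
  have hr₂0 : 0 ≤ r₂ := hR₂.nonneg
  refine ⟨r₁ + |(-1 : ℝ)| * r₂ + sb * tg, ?_, ?_⟩
  · have e1 : (n₂ : ℝ) * S * tg ≤ (n₂ : ℝ) * S * T :=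
      mul_le_mul_of_nonneg_left htg (by positivity)
    have e2 : (n₁ : ℝ) * T * sb ≤ (n₁ : ℝ) * T * S :=
      mul_le_mul_of_nonneg_left hsb (by positivity)
    have e3 : sb * tg ≤ S * T := mul_le_mul hsb htg htg0 hS0
    rw [abs_neg, abs_one, one_mul]
    nlinarith
  · have hexp : Lb β g - Lb γ b + ⁅b, g⁆
        = (Lb β g + (-1 : ℝ) • (Lb γ b)) + ⁅b, g⁆ := by
      rw [neg_one_smul, ← sub_eq_add_neg]
    rw [hexp]
    exact (hR₁.add (HasRep.smul (-1) hR₂)).add hBr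

/-- If `β, γ` are homogeneous of degrees `n₁, n₂`, then the modified bracket
`[β,γ] = L_β γ − L_γ β + [β,γ]_0` is homogeneous of degree `n = n₁ + n₂` and satisfies
`C_n([β,γ]) ≤ (n+1) C_{n₁}(β) C_{n₂}(γ)`.  Here `Lb β` is the derivation of the free Lie
algebra with `Lb β x = [β¹,x]`, `Lb β y = [β²,y]`. -/
theorem stmt2
    (Lb : FL × FL → LieDerivation ℝ FL FL)
    (hLbx : ∀ β : FL × FL, Lb β (FreeLieAlgebra.of ℝ true) = ⁅β.1, FreeLieAlgebra.of ℝ true⁆)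
    (hLby : ∀ β : FL × FL, Lb β (FreeLieAlgebra.of ℝ false) = ⁅β.2, FreeLieAlgebra.of ℝ false⁆)
    (br : FL × FL → FL × FL → FL × FL)
    (hbr : ∀ β γ : FL × FL, br β γ =
      (Lb β γ.1 - Lb γ β.1 + ⁅β.1, γ.1⁆, Lb β γ.2 - Lb γ β.2 + ⁅β.2, γ.2⁆))
    (n₁ n₂ : ℕ) (β γ : FL × FL) (hβ : HomogP n₁ β) (hγ : HomogP n₂ γ) :
    HomogP (n₁ + n₂) (br β γ) ∧
    CnP (n₁ + n₂) (br β γ) ≤ ((n₁ : ℝ) + n₂ + 1) * CnP n₁ β * CnP n₂ γ := by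
  set A := CnP n₁ β with hA
  set B := CnP n₂ γ with hB
  have hA0 : 0 ≤ A := le_trans (cn_nonneg n₁ β.1) (le_max_left _ _)
  have hB0 : 0 ≤ B := le_trans (cn_nonneg n₂ γ.1) (le_max_left _ _)
  have key : ∀ ε > (0 : ℝ),
      HomogP (n₁ + n₂) (br β γ) ∧
      CnP (n₁ + n₂) (br β γ) ≤ ((n₁ : ℝ) + n₂ + 1) * (A + ε) * (B + ε) := by
    intro ε hε
    have hAlt : A < A + ε := by linarith
    have hBlt : B < B + ε := by linarith
    have e1 : Cn n₁ β.1 < A + ε :=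
      lt_of_le_of_lt (le_max_left (Cn n₁ β.1) (Cn n₁ β.2)) hAlt
    have e2 : Cn n₁ β.2 < A + ε :=
      lt_of_le_of_lt (le_max_right (Cn n₁ β.1) (Cn n₁ β.2)) hAlt
    have e3 : Cn n₂ γ.1 < B + ε :=
      lt_of_le_of_lt (le_max_left (Cn n₂ γ.1) (Cn n₂ γ.2)) hBlt
    have e4 : Cn n₂ γ.2 < B + ε :=
      lt_of_le_of_lt (le_max_right (Cn n₂ γ.1) (Cn n₂ γ.2)) hBlt
    obtain ⟨s₁, hs₁lt, hb1⟩ := exists_hasRep_lt hβ.1 e1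
    obtain ⟨s₂, hs₂lt, hb2⟩ := exists_hasRep_lt hβ.2 e2
    obtain ⟨t₁, ht₁lt, hg1⟩ := exists_hasRep_lt hγ.1 e3
    obtain ⟨t₂, ht₂lt, hg2⟩ := exists_hasRep_lt hγ.2 e4
    have hs₁ : s₁ ≤ A + ε := le_of_lt hs₁lt
    have hs₂ : s₂ ≤ A + ε := le_of_lt hs₂lt
    have ht₁ : t₁ ≤ B + ε := le_of_lt ht₁lt
    have ht₂ : t₂ ≤ B + ε := le_of_lt ht₂lt
    obtain ⟨r₁, hr₁le, hR₁⟩ := comp_key Lb hLbx hLby n₁ n₂ β γ (A + ε) (B + ε)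
      hb1 hb2 hs₁ hs₂ hg1 hg2 ht₁ ht₂ hb1 hg1 hs₁ ht₁
    obtain ⟨r₂, hr₂le, hR₂⟩ := comp_key Lb hLbx hLby n₁ n₂ β γ (A + ε) (B + ε)
      hb1 hb2 hs₁ hs₂ hg1 hg2 ht₁ ht₂ hb2 hg2 hs₂ ht₂
    rw [hbr]
    refine ⟨⟨homog_of_hasRep hR₁, homog_of_hasRep hR₂⟩, ?_⟩
    have c1 : Cn (n₁ + n₂) (Lb β γ.1 - Lb γ β.1 + ⁅β.1, γ.1⁆) ≤
        ((n₁ : ℝ) + n₂ + 1) * (A + ε) * (B + ε) :=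
      le_trans (cn_le_of_hasRep hR₁) hr₁le
    have c2 : Cn (n₁ + n₂) (Lb β γ.2 - Lb γ β.2 + ⁅β.2, γ.2⁆) ≤
        ((n₁ : ℝ) + n₂ + 1) * (A + ε) * (B + ε) :=
      le_trans (cn_le_of_hasRep hR₂) hr₂le
    exact max_le c1 c2
  refine ⟨(key 1 one_pos).1, ?_⟩
  have lim : Filter.Tendsto (fun ε : ℝ => ((n₁ : ℝ) + n₂ + 1) * (A + ε) * (B + ε))
      (nhdsWithin 0 (Set.Ioi 0)) (nhds (((n₁ : ℝ) + n₂ + 1) * A * B)) := by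
    have hcont : Filter.Tendsto (fun ε : ℝ => ((n₁ : ℝ) + n₂ + 1) * (A + ε) * (B + ε))
        (nhds 0) (nhds (((n₁ : ℝ) + n₂ + 1) * (A + 0) * (B + 0))) := by
      exact ((continuous_const.mul (continuous_const.add continuous_id)).mul
        (continuous_const.add continuous_id)).tendsto 0
    simpa using hcont.mono_left nhdsWithin_le_nhds
  exact ge_of_tendsto lim (Filter.eventually_of_mem self_mem_nhdsWithin
    fun ε hε => (key ε hε).2)
end
end

section
/- Let D > 0 and suppose β₁,…,β_k and γ are elements of l̂ × l̂ with C_n(β_i) ≤ Dⁿ and C_n(γ) ≤ Dⁿ for all n ≥ 1. Then for all n ≥ 1, C_n(ad_{β_k} ⋯ ad_{β_1} γ) ≤ (2n²)^k / (2k−1)!! · Dⁿ, where (2k−1)!! = (2k−1)(2k−3)⋯1 and the adjoint action ad_β = [β,·] is taken with respect to the modified bracket [β,γ] = L_β γ − L_γ β + [β,γ]_0. -/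
noncomputable section
open Nat

/-- The modified bracket, extended degreewise to elements of the completion `l̂ × l̂`
(given by their homogeneous components `ℕ → FL × FL`). -/
def brFam (br : FL × FL → FL × FL → FL × FL) (a c : ℕ → FL × FL) : ℕ → FL × FL :=
  fun n => ∑ p ∈ Finset.HasAntidiagonal.antidiagonal n, br (a p.1) (c p.2)

/-- Iterated adjoint action `ad_{β_k} ⋯ ad_{β_1} γ` (with `bs = [β₁, …, β_k]`). -/
def adIter (br : FL × FL → FL × FL → FL × FL)
    (bs : List (ℕ → FL × FL)) (γ : ℕ → FL × FL) : ℕ → FL × FL :=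
  bs.foldl (fun acc β => brFam br β acc) γ

/-!
`C_n` is the ℓ¹ quotient norm on the span of the Lie words of length `n`, hence subadditive and
submultiplicative for the bracket: `C_{m+p}[u,v] ≤ C_m(u) C_p(v)`. A derivation raising degrees
by `m` with norm at most `K` on the generators has, by Leibniz' rule, norm at most `pK` in
degree `p`; applied to `L_β` and `L_γ` this gives
`C_{m+p}[β,γ] ≤ (m+p+1) C_m(β) C_p(γ)` for the modified bracket. Since `β` has no degree-zero
part, summing over the degree-`n` antidiagonal turns a bound `f(q) D^q` on `γ` into
`(n+1) (∑_{q<n} f(q)) Dⁿ`, and for `f(q) = (2q²)^j/(2j−1)‼` the comparison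
`(2j+1) ∑_{q<n} q^{2j} ≤ n^{2j+1}` with an integral turns this into `(2n²)^{j+1}/(2j+1)‼`.
Induction on `k` concludes.
-/

open Finset.HasAntidiagonal

lemma IsLieWord.one_le {n : ℕ} {u : FL} (h : IsLieWord n u) : 1 ≤ n := by
  induction h <;> omega

lemma IsLieWord.homog {n : ℕ} {u : FL} (h : IsLieWord n u) : Homog n u :=
  Submodule.subset_span h

namespace Homog

variable {n : ℕ} {a b : FL}

lemma zero (n : ℕ) : Homog n 0 := Submodule.zero_mem _

lemma add (ha : Homog n a) (hb : Homog n b) : Homog n (a + b) := Submodule.add_mem _ ha hb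

lemma neg (ha : Homog n a) : Homog n (-a) := Submodule.neg_mem _ ha

lemma sub (ha : Homog n a) (hb : Homog n b) : Homog n (a - b) := Submodule.sub_mem _ ha hb

lemma smul (r : ℝ) (ha : Homog n a) : Homog n (r • a) := Submodule.smul_mem _ r ha

lemma sum {ι : Type*} {s : Finset ι} {f : ι → FL} (h : ∀ i ∈ s, Homog n (f i)) :
    Homog n (∑ i ∈ s, f i) :=
  Submodule.sum_mem _ h

lemma lie {m p : ℕ} {u v : FL} (hu : Homog m u) (hv : Homog p v) : Homog (m + p) ⁅u, v⁆ := by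
  induction hu using Submodule.span_induction with
  | mem x hx =>
    induction hv using Submodule.span_induction with
    | mem y hy => exact (hx.lie hy).homog
    | zero => simpa using zero _
    | add y z _ _ hy hz => simpa [lie_add] using hy.add hz
    | smul r y _ hy => simpa [lie_smul] using hy.smul r
  | zero => simpa using zero _
  | add x y _ _ hx hy => simpa [add_lie] using hx.add hy
  | smul r x _ hx => simpa [smul_lie] using hx.smul r

lemma eq_zero_of_degree_zero (h : Homog 0 a) : a = 0 := by
  have hempty : {u : FL | IsLieWord 0 u} = ∅ :=
    Set.eq_empty_iff_forall_notMem.2 fun u hu => absurd hu.one_le (by omega)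
  rwa [Homog, hempty, Submodule.span_empty, Submodule.mem_bot] at h

lemma exists_repr (h : Homog n a) : ∃ (m : ℕ) (c : Fin m → ℝ) (w : Fin m → FL),
    (∀ i, IsLieWord n (w i)) ∧ a = ∑ i, c i • w i := by
  obtain ⟨m, c, w, hsum⟩ := Submodule.mem_span_set'.1 h
  exact ⟨m, c, fun i => w i, fun i => (w i).2, hsum.symm⟩

end Homog

lemma Cn_nonneg (n : ℕ) (a : FL) : 0 ≤ Cn n a :=
  Real.sInf_nonneg (by rintro _ ⟨m, c, w, -, -, rfl⟩; positivity)

lemma Cn_le_of_repr {n : ℕ} {a : FL} {ι : Type*} [Fintype ι] (c : ι → ℝ) (w : ι → FL)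
    (hw : ∀ i, IsLieWord n (w i)) (ha : a = ∑ i, c i • w i) : Cn n a ≤ ∑ i, |c i| := by
  let e := (Fintype.equivFin ι).symm
  refine csInf_le ⟨0, by rintro _ ⟨m, c, w, -, -, rfl⟩; positivity⟩
    ⟨_, c ∘ e, w ∘ e, fun i => hw _, ?_, (e.sum_comp fun i => |c i|).symm⟩
  rw [ha]
  exact (e.sum_comp fun i => c i • w i).symm

lemma le_mul_Cn {n : ℕ} {a : FL} (ha : Homog n a) {X K : ℝ}
    (h : ∀ (m : ℕ) (c : Fin m → ℝ) (w : Fin m → FL), (∀ i, IsLieWord n (w i)) →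
      a = ∑ i, c i • w i → X ≤ K * ∑ i, |c i|) :
    X ≤ K * Cn n a := by
  obtain ⟨m, c, w, hw, hrepr⟩ := ha.exists_repr
  rcases le_or_gt K 0 with hK | hK
  · exact (h m c w hw hrepr).trans
      (mul_le_mul_of_nonpos_left (Cn_le_of_repr c w hw hrepr) hK)
  · rw [← div_le_iff₀' hK]
    refine le_csInf ⟨_, m, c, w, hw, hrepr, rfl⟩ ?_
    rintro _ ⟨m', c', w', hw', hrepr', rfl⟩
    rw [div_le_iff₀' hK]
    exact h m' c' w' hw' hrepr'

lemma Cn_zero (n : ℕ) : Cn n 0 = 0 := by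
  refine le_antisymm ?_ (Cn_nonneg n 0)
  simpa using Cn_le_of_repr (n := n) (a := 0) (fun _ : Empty => (0 : ℝ)) (fun _ => 0)
    (fun i => i.elim) (by simp)

lemma IsLieWord.Cn_le_one {n : ℕ} {u : FL} (h : IsLieWord n u) : Cn n u ≤ 1 := by
  simpa using Cn_le_of_repr (fun _ : Fin 1 => (1 : ℝ)) (fun _ => u) (fun _ => h) (by simp)

lemma Cn_add_le {n : ℕ} {a b : FL} (ha : Homog n a) (hb : Homog n b) :
    Cn n (a + b) ≤ Cn n a + Cn n b := by
  suffices Cn n (a + b) - Cn n b ≤ 1 * Cn n a by linarith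
  refine le_mul_Cn ha fun m₁ c₁ w₁ hw₁ ha' => ?_
  suffices Cn n (a + b) - ∑ i, |c₁ i| ≤ 1 * Cn n b by linarith
  refine le_mul_Cn hb fun m₂ c₂ w₂ hw₂ hb' => ?_
  have := Cn_le_of_repr (a := a + b) (Sum.elim c₁ c₂) (Sum.elim w₁ w₂) (fun i => i.rec hw₁ hw₂)
    (by simp [Fintype.sum_sum_type, ha', hb'])
  simp only [Fintype.sum_sum_type, Sum.elim_inl, Sum.elim_inr] at this
  linarith

lemma Cn_smul_le {n : ℕ} (r : ℝ) {a : FL} (ha : Homog n a) : Cn n (r • a) ≤ |r| * Cn n a := by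
  refine le_mul_Cn ha fun m c w hw hrepr => ?_
  simpa [abs_mul, Finset.mul_sum] using
    Cn_le_of_repr (fun i => r * c i) w hw (by simp [hrepr, Finset.smul_sum, mul_smul])

lemma Cn_neg_le {n : ℕ} {a : FL} (ha : Homog n a) : Cn n (-a) ≤ Cn n a := by
  simpa using Cn_smul_le (-1) ha

lemma Cn_sub_le {n : ℕ} {a b : FL} (ha : Homog n a) (hb : Homog n b) :
    Cn n (a - b) ≤ Cn n a + Cn n b := by
  rw [sub_eq_add_neg]
  exact (Cn_add_le ha hb.neg).trans (by linarith [Cn_neg_le hb])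

lemma Cn_sum_le {n : ℕ} {ι : Type*} (s : Finset ι) {f : ι → FL} (h : ∀ i ∈ s, Homog n (f i)) :
    Cn n (∑ i ∈ s, f i) ≤ ∑ i ∈ s, Cn n (f i) := by
  classical
  induction s using Finset.induction_on with
  | empty => simp [Cn_zero]
  | insert i s hi ih =>
    rw [Finset.sum_insert hi, Finset.sum_insert hi]
    have hs : ∀ j ∈ s, Homog n (f j) := fun j hj => h j (Finset.mem_insert_of_mem hj)
    exact (Cn_add_le (h i (Finset.mem_insert_self i s)) (Homog.sum hs)).trans
      (by linarith [ih hs])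

lemma Cn_lie_le {m p : ℕ} {u v : FL} (hu : Homog m u) (hv : Homog p v) :
    Cn (m + p) ⁅u, v⁆ ≤ Cn m u * Cn p v := by
  refine le_mul_Cn hv fun m₂ d z hz hv' => ?_
  rw [mul_comm]
  refine le_mul_Cn hu fun m₁ c w hw hu' => ?_
  have hrepr : ⁅u, v⁆ = ∑ ij : Fin m₁ × Fin m₂, (c ij.1 * d ij.2) • ⁅w ij.1, z ij.2⁆ := by
    rw [hu', hv', Fintype.sum_prod_type, sum_lie]
    refine Finset.sum_congr rfl fun i _ => ?_
    rw [smul_lie, lie_sum, Finset.smul_sum]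
    refine Finset.sum_congr rfl fun j _ => ?_
    rw [lie_smul, smul_smul]
  simpa [abs_mul, Fintype.sum_prod_type, Finset.mul_sum, Finset.sum_mul, mul_comm] using
    Cn_le_of_repr _ _ (fun ij : Fin m₁ × Fin m₂ => (hw ij.1).lie (hz ij.2)) hrepr

section Derivation

variable (T : LieDerivation ℝ FL FL) {m : ℕ}

lemma Homog.derivation_apply (hT : ∀ b, Homog (m + 1) (T (FreeLieAlgebra.of ℝ b)))
    {p : ℕ} {a : FL} (ha : Homog p a) : Homog (m + p) (T a) := by
  induction ha using Submodule.span_induction with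
  | mem u hu =>
    induction hu with
    | of b => exact hT b
    | @lie p q u v hu hv ihu ihv =>
      rw [LieDerivation.apply_lie_eq_add]
      refine Homog.add ?_ ?_
      · simpa only [Nat.add_left_comm] using hu.homog.lie ihv
      · simpa only [Nat.add_assoc] using ihu.lie hv.homog
  | zero => simpa using Homog.zero _
  | add a b _ _ ha hb => simpa using ha.add hb
  | smul r a _ ha => simpa using ha.smul r

lemma IsLieWord.Cn_derivation_apply_le (hT : ∀ b, Homog (m + 1) (T (FreeLieAlgebra.of ℝ b)))
    {K : ℝ} (hK : ∀ b, Cn (m + 1) (T (FreeLieAlgebra.of ℝ b)) ≤ K)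
    {p : ℕ} {u : FL} (hu : IsLieWord p u) : Cn (m + p) (T u) ≤ p * K := by
  induction hu with
  | of b => simpa using hK b
  | @lie p q u v hu hv ihu ihv =>
    rw [LieDerivation.apply_lie_eq_add]
    have hTu := hu.homog.derivation_apply T hT
    have hTv := hv.homog.derivation_apply T hT
    have h₁ : Cn (m + (p + q)) ⁅u, T v⁆ ≤ q * K := by
      rw [Nat.add_left_comm]
      calc Cn (p + (m + q)) ⁅u, T v⁆ ≤ Cn p u * Cn (m + q) (T v) := Cn_lie_le hu.homog hTv
        _ ≤ 1 * Cn (m + q) (T v) :=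
          mul_le_mul_of_nonneg_right hu.Cn_le_one (Cn_nonneg _ _)
        _ ≤ q * K := by linarith
    have h₂ : Cn (m + (p + q)) ⁅T u, v⁆ ≤ p * K := by
      rw [← Nat.add_assoc]
      calc Cn (m + p + q) ⁅T u, v⁆ ≤ Cn (m + p) (T u) * Cn q v := Cn_lie_le hTu hv.homog
        _ ≤ Cn (m + p) (T u) * 1 :=
          mul_le_mul_of_nonneg_left hv.Cn_le_one (Cn_nonneg _ _)
        _ ≤ p * K := by linarith
    have hsum := Cn_add_le (by simpa only [Nat.add_left_comm] using hu.homog.lie hTv)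
      (by simpa only [Nat.add_assoc] using hTu.lie hv.homog)
    push_cast
    linarith

lemma Cn_derivation_apply_le (hT : ∀ b, Homog (m + 1) (T (FreeLieAlgebra.of ℝ b)))
    {K : ℝ} (hK : ∀ b, Cn (m + 1) (T (FreeLieAlgebra.of ℝ b)) ≤ K)
    {p : ℕ} {a : FL} (ha : Homog p a) : Cn (m + p) (T a) ≤ p * K * Cn p a := by
  refine le_mul_Cn ha fun n c w hw hrepr => ?_
  have hTa : T a = ∑ i, c i • T (w i) := by simp [hrepr]
  have hTw i : Homog (m + p) (T (w i)) := (hw i).homog.derivation_apply T hT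
  calc Cn (m + p) (T a) ≤ ∑ i, Cn (m + p) (c i • T (w i)) :=
        hTa ▸ Cn_sum_le _ fun i _ => (hTw i).smul _
    _ ≤ ∑ i, |c i| * (p * K) := Finset.sum_le_sum fun i _ =>
        (Cn_smul_le _ (hTw i)).trans (mul_le_mul_of_nonneg_left
          ((hw i).Cn_derivation_apply_le T hT hK) (abs_nonneg _))
    _ = p * K * ∑ i, |c i| := by rw [Finset.mul_sum]; simp only [mul_comm]

end Derivation

lemma CnP_nonneg (n : ℕ) (x : FL × FL) : 0 ≤ CnP n x := le_max_of_le_left (Cn_nonneg _ _)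

lemma HomogP.CnP_eq_zero {x : FL × FL} (hx : HomogP 0 x) : CnP 0 x = 0 := by
  simp [CnP, hx.1.eq_zero_of_degree_zero, hx.2.eq_zero_of_degree_zero, Cn_zero]

lemma HomogP.sum {n : ℕ} {ι : Type*} {s : Finset ι} {f : ι → FL × FL}
    (h : ∀ i ∈ s, HomogP n (f i)) : HomogP n (∑ i ∈ s, f i) := by
  rw [HomogP, Prod.fst_sum, Prod.snd_sum]
  exact ⟨Homog.sum fun i hi => (h i hi).1, Homog.sum fun i hi => (h i hi).2⟩

lemma CnP_sum_le {n : ℕ} {ι : Type*} (s : Finset ι) {f : ι → FL × FL}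
    (h : ∀ i ∈ s, HomogP n (f i)) : CnP n (∑ i ∈ s, f i) ≤ ∑ i ∈ s, CnP n (f i) := by
  rw [CnP, Prod.fst_sum, Prod.snd_sum]
  exact max_le
    ((Cn_sum_le s fun i hi => (h i hi).1).trans (Finset.sum_le_sum fun _ _ => le_max_left _ _))
    ((Cn_sum_le s fun i hi => (h i hi).2).trans (Finset.sum_le_sum fun _ _ => le_max_right _ _))

/-- `Lb β` is the derivation `L_β` and `br` the modified bracket. -/
structure IsModifiedBracket (Lb : FL × FL → LieDerivation ℝ FL FL)
    (br : FL × FL → FL × FL → FL × FL) : Prop where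
  apply_x : ∀ β : FL × FL, Lb β (FreeLieAlgebra.of ℝ true) = ⁅β.1, FreeLieAlgebra.of ℝ true⁆
  apply_y : ∀ β : FL × FL, Lb β (FreeLieAlgebra.of ℝ false) = ⁅β.2, FreeLieAlgebra.of ℝ false⁆
  br_eq : ∀ β γ : FL × FL, br β γ =
    (Lb β γ.1 - Lb γ β.1 + ⁅β.1, γ.1⁆, Lb β γ.2 - Lb γ β.2 + ⁅β.2, γ.2⁆)

namespace IsModifiedBracket

variable {Lb : FL × FL → LieDerivation ℝ FL FL} {br : FL × FL → FL × FL → FL × FL}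
  {m p : ℕ} {β γ : FL × FL}

lemma homog_apply_of (h : IsModifiedBracket Lb br) (hβ : HomogP m β) (b : Bool) :
    Homog (m + 1) (Lb β (FreeLieAlgebra.of ℝ b)) := by
  cases b
  · rw [h.apply_y]; exact hβ.2.lie (IsLieWord.of false).homog
  · rw [h.apply_x]; exact hβ.1.lie (IsLieWord.of true).homog

lemma Cn_apply_of_le (h : IsModifiedBracket Lb br) (hβ : HomogP m β) (b : Bool) :
    Cn (m + 1) (Lb β (FreeLieAlgebra.of ℝ b)) ≤ CnP m β := by
  have hgen (z : FL) (hz : Homog m z) : Cn (m + 1) ⁅z, FreeLieAlgebra.of ℝ b⁆ ≤ Cn m z :=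
    (Cn_lie_le hz (IsLieWord.of b).homog).trans
      (mul_le_of_le_one_right (Cn_nonneg _ _) (IsLieWord.of b).Cn_le_one)
  cases b
  · rw [h.apply_y]; exact (hgen _ hβ.2).trans (le_max_right _ _)
  · rw [h.apply_x]; exact (hgen _ hβ.1).trans (le_max_left _ _)

lemma homog_component (h : IsModifiedBracket Lb br) (hβ : HomogP m β) (hγ : HomogP p γ)
    {x y : FL} (hx : Homog m x) (hy : Homog p y) : Homog (m + p) (Lb β y - Lb γ x + ⁅x, y⁆) := by
  refine (Homog.sub ?_ ?_).add (hx.lie hy)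
  · exact hy.derivation_apply _ (h.homog_apply_of hβ)
  · simpa only [Nat.add_comm] using hx.derivation_apply _ (h.homog_apply_of hγ)

lemma Cn_component_le (h : IsModifiedBracket Lb br) (hβ : HomogP m β) (hγ : HomogP p γ)
    {x y : FL} (hx : Homog m x) (hy : Homog p y) (hxβ : Cn m x ≤ CnP m β)
    (hyγ : Cn p y ≤ CnP p γ) :
    Cn (m + p) (Lb β y - Lb γ x + ⁅x, y⁆) ≤ (m + p + 1) * (CnP m β * CnP p γ) := by
  have hLy := hy.derivation_apply _ (h.homog_apply_of hβ)
  have hLx := hx.derivation_apply _ (h.homog_apply_of hγ)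
  have h₁ : Cn (m + p) (Lb β y) ≤ p * CnP m β * CnP p γ :=
    (Cn_derivation_apply_le _ (h.homog_apply_of hβ) (h.Cn_apply_of_le hβ) hy).trans
      (mul_le_mul_of_nonneg_left hyγ (mul_nonneg p.cast_nonneg (CnP_nonneg _ _)))
  have h₂ : Cn (m + p) (Lb γ x) ≤ m * CnP p γ * CnP m β := by
    rw [Nat.add_comm]
    exact (Cn_derivation_apply_le _ (h.homog_apply_of hγ) (h.Cn_apply_of_le hγ) hx).trans
      (mul_le_mul_of_nonneg_left hxβ (mul_nonneg m.cast_nonneg (CnP_nonneg _ _)))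
  have h₃ : Cn (m + p) ⁅x, y⁆ ≤ CnP m β * CnP p γ :=
    (Cn_lie_le hx hy).trans (mul_le_mul hxβ hyγ (Cn_nonneg _ _) (CnP_nonneg _ _))
  rw [Nat.add_comm p m] at hLx
  have hadd := Cn_add_le (hLy.sub hLx) (hx.lie hy)
  have hsub := Cn_sub_le hLy hLx
  linarith

lemma homogP_apply (h : IsModifiedBracket Lb br) (hβ : HomogP m β) (hγ : HomogP p γ) :
    HomogP (m + p) (br β γ) := by
  rw [h.br_eq]
  exact ⟨h.homog_component hβ hγ hβ.1 hγ.1, h.homog_component hβ hγ hβ.2 hγ.2⟩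

lemma CnP_apply_le (h : IsModifiedBracket Lb br) (hβ : HomogP m β) (hγ : HomogP p γ) :
    CnP (m + p) (br β γ) ≤ (m + p + 1) * (CnP m β * CnP p γ) := by
  rw [h.br_eq]
  exact max_le (h.Cn_component_le hβ hγ hβ.1 hγ.1 (le_max_left _ _) (le_max_left _ _))
    (h.Cn_component_le hβ hγ hβ.2 hγ.2 (le_max_right _ _) (le_max_right _ _))

variable {β γ : ℕ → FL × FL}

lemma homogP_brFam (h : IsModifiedBracket Lb br) (hβ : ∀ n, HomogP n (β n))
    (hγ : ∀ n, HomogP n (γ n)) (n : ℕ) : HomogP n (brFam br β γ n) :=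
  HomogP.sum fun q hq => mem_antidiagonal.1 hq ▸ h.homogP_apply (hβ q.1) (hγ q.2)

lemma CnP_brFam_le (h : IsModifiedBracket Lb br) (hβ : ∀ n, HomogP n (β n))
    (hγ : ∀ n, HomogP n (γ n)) (n : ℕ) :
    CnP n (brFam br β γ n) ≤
      (n + 1) * ∑ q ∈ antidiagonal n, CnP q.1 (β q.1) * CnP q.2 (γ q.2) := by
  rw [Finset.mul_sum]
  refine (CnP_sum_le _ fun q hq => mem_antidiagonal.1 hq ▸
    h.homogP_apply (hβ q.1) (hγ q.2)).trans (Finset.sum_le_sum fun q hq => ?_)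
  obtain rfl := mem_antidiagonal.1 hq
  exact_mod_cast h.CnP_apply_le (hβ q.1) (hγ q.2)

lemma homogP_adIter (h : IsModifiedBracket Lb br) {bs : List (ℕ → FL × FL)}
    (hbs : ∀ β ∈ bs, ∀ n, HomogP n (β n)) (hγ : ∀ n, HomogP n (γ n)) (n : ℕ) :
    HomogP n (adIter br bs γ n) := by
  induction bs generalizing γ with
  | nil => exact hγ n
  | cons β bs ih =>
    exact ih (fun β' hβ' => hbs β' (List.mem_cons_of_mem _ hβ'))
      (h.homogP_brFam (hbs β List.mem_cons_self) hγ)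

end IsModifiedBracket

lemma sum_antidiagonal_mul_le {a b f : ℕ → ℝ} {D : ℝ} (ha₀ : a 0 = 0) (ha : ∀ k, 0 ≤ a k)
    (haD : ∀ k, a k ≤ D ^ k) (hb : ∀ k, 0 ≤ b k) (hbf : ∀ k, b k ≤ f k * D ^ k) (n : ℕ) :
    ∑ q ∈ antidiagonal n, a q.1 * b q.2 ≤ D ^ n * ∑ q ∈ Finset.range n, f q := by
  cases n with
  | zero => simp [ha₀]
  | succ n =>
    calc ∑ q ∈ antidiagonal (n + 1), a q.1 * b q.2
        = ∑ q ∈ antidiagonal n, a (q.1 + 1) * b q.2 := by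
          rw [Finset.Nat.sum_antidiagonal_succ, ha₀, zero_mul, zero_add]
      _ ≤ ∑ q ∈ antidiagonal n, D ^ (n + 1) * f q.2 := Finset.sum_le_sum fun q hq => by
          obtain rfl := mem_antidiagonal.1 hq
          calc a (q.1 + 1) * b q.2 ≤ D ^ (q.1 + 1) * (f q.2 * D ^ q.2) :=
                mul_le_mul (haD _) (hbf _) (hb _) ((ha _).trans (haD _))
            _ = D ^ (q.1 + q.2 + 1) * f q.2 := by ring
      _ = D ^ (n + 1) * ∑ q ∈ Finset.range (n + 1), f q := by
          rw [← Finset.mul_sum, Finset.Nat.sum_antidiagonal_eq_sum_range_succ (fun _ j => f j),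
            ← Finset.sum_range_reflect]
          refine congrArg _ (Finset.sum_congr rfl fun q hq => congrArg f ?_)
          have := Finset.mem_range.1 hq
          omega

lemma sum_range_pow_le (m n : ℕ) :
    (m + 1) * ∑ q ∈ Finset.range n, (q : ℝ) ^ m ≤ (n : ℝ) ^ (m + 1) := by
  have hmono : MonotoneOn (fun x : ℝ => x ^ m) (Set.Icc 0 (0 + n)) :=
    fun x hx y _ hxy => pow_le_pow_left₀ hx.1 hxy m
  have := hmono.sum_le_integral
  simp only [zero_add, integral_pow] at this
  rw [zero_pow (Nat.succ_ne_zero m), sub_zero, le_div_iff₀ (by positivity)] at this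
  linarith

-- At `j = 0` truncated subtraction gives `(2 * 0 - 1)‼ = 0‼ = 1`, the convention `(−1)‼ = 1`.
def adBound (j n : ℕ) : ℝ := (2 * (n : ℝ) ^ 2) ^ j / ((2 * j - 1)‼ : ℝ)

lemma succ_mul_sum_adBound_le (j n : ℕ) :
    ((n : ℝ) + 1) * ∑ q ∈ Finset.range n, adBound j q ≤ adBound (j + 1) n := by
  have hd : ((2 * (j + 1) - 1)‼ : ℝ) = (2 * j + 1) * ((2 * j - 1)‼ : ℝ) := by
    rw [show 2 * (j + 1) - 1 = 2 * j + 1 by omega, Nat.doubleFactorial_add_one]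
    push_cast
    ring
  have hsum : ∑ q ∈ Finset.range n, adBound j q =
      2 ^ j / ((2 * j - 1)‼ : ℝ) * ∑ q ∈ Finset.range n, (q : ℝ) ^ (2 * j) := by
    rw [Finset.mul_sum]
    refine Finset.sum_congr rfl fun q _ => ?_
    rw [adBound, mul_pow, ← pow_mul]
    ring
  have hpow := sum_range_pow_le (2 * j) n
  have hn : ((n : ℝ) + 1) * (n : ℝ) ^ (2 * j + 1) ≤ 2 * (n : ℝ) ^ (2 * j + 2) := by
    rcases Nat.eq_zero_or_pos n with rfl | hn
    · simp
    · have : (1 : ℝ) ≤ n := by exact_mod_cast hn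
      rw [pow_succ _ (2 * j + 1)]
      nlinarith [pow_nonneg (Nat.cast_nonneg (α := ℝ) n) (2 * j + 1)]
  push_cast at hpow
  rw [hsum, adBound, hd, mul_pow, ← pow_mul, le_div_iff₀ (by positivity)]
  calc ((n : ℝ) + 1) * (2 ^ j / ((2 * j - 1)‼ : ℝ) * ∑ q ∈ Finset.range n, (q : ℝ) ^ (2 * j)) *
        ((2 * j + 1) * ((2 * j - 1)‼ : ℝ))
      = 2 ^ j * (((n : ℝ) + 1) * ((2 * j + 1) * ∑ q ∈ Finset.range n, (q : ℝ) ^ (2 * j))) := by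
        field_simp
    _ ≤ 2 ^ j * (((n : ℝ) + 1) * (n : ℝ) ^ (2 * j + 1)) := by gcongr
    _ ≤ 2 ^ j * (2 * (n : ℝ) ^ (2 * j + 2)) := by gcongr
    _ = 2 ^ (j + 1) * (n : ℝ) ^ (2 * (j + 1)) := by ring

lemma CnP_le_of_one_le {x : ℕ → FL × FL} (hx : ∀ n, HomogP n (x n)) {c : ℕ → ℝ}
    (hc₀ : 0 ≤ c 0) (hc : ∀ n, 1 ≤ n → CnP n (x n) ≤ c n) (n : ℕ) : CnP n (x n) ≤ c n := by
  rcases Nat.eq_zero_or_pos n with rfl | hn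
  · rw [(hx 0).CnP_eq_zero]
    exact hc₀
  · exact hc n hn

lemma IsModifiedBracket.CnP_adIter_le {Lb : FL × FL → LieDerivation ℝ FL FL}
    {br : FL × FL → FL × FL → FL × FL} (h : IsModifiedBracket Lb br) {D : ℝ}
    {bs : List (ℕ → FL × FL)} (hbs : ∀ β ∈ bs, ∀ n, HomogP n (β n))
    (hbsC : ∀ β ∈ bs, ∀ n, CnP n (β n) ≤ D ^ n) {j : ℕ} {γ : ℕ → FL × FL}
    (hγ : ∀ n, HomogP n (γ n)) (hγC : ∀ n, CnP n (γ n) ≤ adBound j n * D ^ n) (n : ℕ) :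
    CnP n (adIter br bs γ n) ≤ adBound (j + bs.length) n * D ^ n := by
  induction bs generalizing j γ with
  | nil => exact hγC n
  | cons β bs ih =>
    have hβ := hbs β List.mem_cons_self
    have hβC := hbsC β List.mem_cons_self
    have hstep (n : ℕ) : CnP n (brFam br β γ n) ≤ adBound (j + 1) n * D ^ n := by
      have hDn : 0 ≤ D ^ n := (CnP_nonneg _ _).trans (hβC n)
      calc CnP n (brFam br β γ n)
          ≤ (n + 1) * ∑ q ∈ antidiagonal n,
              CnP q.1 (β q.1) * CnP q.2 (γ q.2) := h.CnP_brFam_le hβ hγ n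
        _ ≤ (n + 1) * (D ^ n * ∑ q ∈ Finset.range n, adBound j q) := by
          gcongr
          exact sum_antidiagonal_mul_le (hβ 0).CnP_eq_zero (fun _ => CnP_nonneg _ _) hβC
            (fun _ => CnP_nonneg _ _) hγC n
        _ = D ^ n * ((n + 1) * ∑ q ∈ Finset.range n, adBound j q) := by ring
        _ ≤ D ^ n * adBound (j + 1) n := by gcongr; exact succ_mul_sum_adBound_le j n
        _ = adBound (j + 1) n * D ^ n := mul_comm _ _
    have := ih (fun β' hβ' => hbs β' (List.mem_cons_of_mem _ hβ'))
      (fun β' hβ' => hbsC β' (List.mem_cons_of_mem _ hβ')) (h.homogP_brFam hβ hγ) hstep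
    rwa [Nat.add_right_comm] at this

theorem stmt3_general
    (Lb : FL × FL → LieDerivation ℝ FL FL)
    (hLbx : ∀ β : FL × FL, Lb β (FreeLieAlgebra.of ℝ true) = ⁅β.1, FreeLieAlgebra.of ℝ true⁆)
    (hLby : ∀ β : FL × FL, Lb β (FreeLieAlgebra.of ℝ false) = ⁅β.2, FreeLieAlgebra.of ℝ false⁆)
    (br : FL × FL → FL × FL → FL × FL)
    (hbr : ∀ β γ : FL × FL, br β γ =
      (Lb β γ.1 - Lb γ β.1 + ⁅β.1, γ.1⁆, Lb β γ.2 - Lb γ β.2 + ⁅β.2, γ.2⁆))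
    (D : ℝ)
    (bs : List (ℕ → FL × FL)) (γ : ℕ → FL × FL)
    (hhombs : ∀ β ∈ bs, ∀ n, HomogP n (β n))
    (hhomγ : ∀ n, HomogP n (γ n))
    (hCbs : ∀ β ∈ bs, ∀ n : ℕ, 1 ≤ n → CnP n (β n) ≤ D ^ n)
    (hCγ : ∀ n : ℕ, 1 ≤ n → CnP n (γ n) ≤ D ^ n) :
    ∀ n : ℕ, 1 ≤ n →
      CnP n (adIter br bs γ n)
        ≤ (2 * (n : ℝ) ^ 2) ^ bs.length / ((2 * bs.length - 1)‼ : ℝ) * D ^ n := by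
  intro n _
  have h : IsModifiedBracket Lb br := ⟨hLbx, hLby, hbr⟩
  have hbsC β (hβ : β ∈ bs) := CnP_le_of_one_le (hhombs β hβ) (by simp) (hCbs β hβ)
  have hγC n : CnP n (γ n) ≤ adBound 0 n * D ^ n := by
    simpa [adBound] using CnP_le_of_one_le hhomγ (by simp) hCγ n
  simpa [adBound] using h.CnP_adIter_le hhombs hbsC hhomγ hγC n

/-- If `C_n(β_i) ≤ Dⁿ` and `C_n(γ) ≤ Dⁿ` for all `n ≥ 1`, then
`C_n(ad_{β_k} ⋯ ad_{β_1} γ) ≤ (2n²)^k/(2k−1)!! · Dⁿ`, the adjoint action being taken with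
respect to the modified bracket `[β,γ] = L_β γ − L_γ β + [β,γ]_0`. -/
theorem stmt3
    (Lb : FL × FL → LieDerivation ℝ FL FL)
    (hLbx : ∀ β : FL × FL, Lb β (FreeLieAlgebra.of ℝ true) = ⁅β.1, FreeLieAlgebra.of ℝ true⁆)
    (hLby : ∀ β : FL × FL, Lb β (FreeLieAlgebra.of ℝ false) = ⁅β.2, FreeLieAlgebra.of ℝ false⁆)
    (br : FL × FL → FL × FL → FL × FL)
    (hbr : ∀ β γ : FL × FL, br β γ =
      (Lb β γ.1 - Lb γ β.1 + ⁅β.1, γ.1⁆, Lb β γ.2 - Lb γ β.2 + ⁅β.2, γ.2⁆))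
    (D : ℝ) (hD : 0 < D)
    (bs : List (ℕ → FL × FL)) (γ : ℕ → FL × FL)
    (hhombs : ∀ β ∈ bs, ∀ n, HomogP n (β n))
    (hhomγ : ∀ n, HomogP n (γ n))
    (hCbs : ∀ β ∈ bs, ∀ n : ℕ, 1 ≤ n → CnP n (β n) ≤ D ^ n)
    (hCγ : ∀ n : ℕ, 1 ≤ n → CnP n (γ n) ≤ D ^ n) :
    ∀ n : ℕ, 1 ≤ n →
      CnP n (adIter br bs γ n)
        ≤ (2 * (n : ℝ) ^ 2) ^ bs.length / ((2 * bs.length - 1)‼ : ℝ) * D ^ n :=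
  stmt3_general Lb hLbx hLby br hbr D bs γ hhombs hhomγ hCbs hCγ
end
end

section
/- Let g and k be finite-dimensional Lie algebras, ψ: g → k a Lie algebra homomorphism, and N a k-module (hence a g-module via ψ). Let (f_i) be a basis of k with dual basis (f^i), and let R = Σ_i R^i ⊗ f_i ∈ End(N) ⊗ k be g-invariant for the natural g-action. Set V(R) = Σ_i R^i ∘ L^N(f_i) ∈ End(N) and ι(R) = Σ_i R^i ⊗ ι(f_i) acting on the Chevalley–Eilenberg complex C(k,N) = N ⊗ Λk*. Then as maps C(k,N) → C(g,N): (V(R) ⊗ ψ*) = (1 ⊗ ψ*) ∘ [d, ι(R)], where d is the Chevalley–Eilenberg differential on C(k,N) and ψ*: Λk* → Λg* is the pullback. In particular, the chain map V(R) ⊗ ψ* is chain homotopic to zero. -/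
/-! Differentiating and contracting a cochain with `x` satisfy the Cartan-type identity
`(dω)(x, v) = ⁅x, ω v⁆ - d(ω(x, ·))(v) - Σ_j (-1)^j ω(⁅x, v_j⁆, v̂_j)`.
Composing with `R^i` commutes with `d` up to the commutators `⁅L(v_m), R^i⁆`, so in
`d ι(R) ω + ι(R) dω` everything cancels except `Σ_i R^i ⁅f_i, ω v⁆` and, for each argument `v_m`,
`Σ_i ⁅L(v_m), R^i⁆ ω(f_i, v̂_m) - Σ_i R^i ω(⁅f_i, v_m⁆, v̂_m)`. The latter is the invariance
condition for `R` under `v_m`, paired with the linear form `ω(·, v̂_m)`, hence vanishes when every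
`v_m` lies in `ψ(g)`. -/

noncomputable section
open scoped TensorProduct

/-- The Chevalley–Eilenberg differential on (alternating) cochains with values in a module,
written on raw cochains: for `ω ∈ C^p(h,V)` and `v : Fin (p+1) → h`,
`(dω)(v) = Σ_i (−1)^i ρ(v_i) ω(…v̂_i…) + Σ_{i<j} (−1)^{i+j} ω([v_i,v_j], …v̂_i…v̂_j…)`
(the second sum is written with the bracket inserted in slot `i`, which for alternating
`ω` produces the sign `(−1)^j`).  The bracket and the module action are parameters. -/
def ceDa {hh V : Type*} [AddCommGroup V] [Module ℝ V]
    (brkt : hh → hh → hh) (ρ : hh → V → V) {p : ℕ}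
    (ω : (Fin p → hh) → V) : (Fin (p + 1) → hh) → V :=
  fun v =>
    (∑ i : Fin (p + 1), ((-1 : ℤ) ^ (i : ℕ)) • ρ (v i) (ω (i.removeNth v))) +
    ∑ i : Fin (p + 1), ∑ j : Fin (p + 1),
      if hij : (i : ℕ) < (j : ℕ) then
        ((-1 : ℤ) ^ (j : ℕ)) •
          ω (Function.update (j.removeNth v)
              (i.castLT (lt_of_lt_of_le hij (Nat.lt_succ_iff.mp j.isLt)))
              (brkt (v i) (v j)))
      else 0

/-- The contraction `ι(R) = Σ_i R^i ⊗ ι(f_i)` on raw cochains. -/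
def ceIota {hh V ι' : Type*} [Fintype ι'] [AddCommGroup V] [Module ℝ V]
    (R : ι' → (V →ₗ[ℝ] V)) (f : ι' → hh) {p : ℕ}
    (ω : (Fin (p + 1) → hh) → V) : (Fin p → hh) → V :=
  fun v => ∑ i, R i (ω (Fin.cons (f i) v))

theorem ceDa_cons {hh V : Type*} [AddCommGroup V] [Module ℝ V]
    (brkt : hh → hh → hh) (ρ : hh → V → V) {p : ℕ}
    (ω : (Fin (p + 1) → hh) → V) (x : hh) (v : Fin (p + 1) → hh) :
    ceDa brkt ρ ω (Fin.cons x v) =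
      ρ x (ω v) - ceDa brkt ρ (fun u => ω (Fin.cons x u)) v
        - ∑ j : Fin (p + 1), (-1 : ℤ) ^ (j : ℕ) • ω (Fin.cons (brkt x (v j)) (j.removeNth v)) := by
  have removeNth_succ_cons : ∀ m : Fin (p + 1),
      m.succ.removeNth (Fin.cons x v : Fin (p + 2) → hh) = Fin.cons x (m.removeNth v) :=
    Fin.cons_comp_succ_succAbove x v
  have update_castLT_zero : ∀ (w : Fin p → hh) (y : hh) (h : ((0 : Fin (p + 2)) : ℕ) < p + 1),
      Function.update (Fin.cons x w : Fin (p + 1) → hh) ((0 : Fin (p + 2)).castLT h) y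
        = (Fin.cons y w : Fin (p + 1) → hh) := fun w y h => by
    rw [show (0 : Fin (p + 2)).castLT h = 0 from Fin.ext (by simp)]
    exact Fin.update_cons_zero (α := fun _ => hh) x w y
  have update_castLT_succ :
      ∀ (w : Fin p → hh) (y : hh) (m : Fin (p + 1)) (h : (m.succ : ℕ) < p + 1),
        Function.update (Fin.cons x w : Fin (p + 1) → hh) (m.succ.castLT h) y
          = (Fin.cons x (Function.update w (m.castLT (by simpa using h)) y) : Fin (p + 1) → hh) :=
    fun w y m h => (Fin.cons_update (α := fun _ => hh) x w (m.castLT (by simpa using h)) y).symm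
  -- Split off index `0` of each sum over `Fin (p + 2)`: it yields `ρ x (ω v)` and the `⁅x, v j⁆`
  -- terms, while the remaining indices reproduce `d(ω(x, ·))` with every sign flipped.
  unfold ceDa
  simp only [Fin.sum_univ_succ (n := p + 1), Fin.val_zero, Fin.val_succ, Fin.cons_zero,
    Fin.cons_succ, Fin.removeNth_zero, Fin.tail_cons, removeNth_succ_cons, Nat.not_lt_zero,
    dite_false, Nat.succ_pos, dite_true, Nat.add_lt_add_iff_right, update_castLT_zero,
    update_castLT_succ, pow_succ, pow_zero, mul_neg_one, neg_smul, one_smul, zero_add,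
    sub_eq_add_neg, neg_add, ← Finset.sum_neg_distrib, apply_dite (Neg.neg : V → V), neg_zero]
  abel

section LieModule

variable {k N : Type*} [LieRing k] [LieAlgebra ℝ k] [AddCommGroup N] [Module ℝ N]
  [LieRingModule k N] [LieModule ℝ k N]

theorem lie_toEnd_apply (x : k) (A : Module.End ℝ N) (n : N) :
    ⁅LieModule.toEnd ℝ k N x, A⁆ n = ⁅x, A n⁆ - A ⁅x, n⁆ := by
  rw [LieRing.of_associative_ring_bracket]
  rfl

theorem ceDa_sum_comp {ι : Type*} [Fintype ι] (A : ι → Module.End ℝ N) {p : ℕ}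
    (θ : ι → (Fin p → k) → N) (v : Fin (p + 1) → k) :
    ceDa (fun u w => ⁅u, w⁆) (fun u n => ⁅u, n⁆) (fun u => ∑ i, A i (θ i u)) v
      = ∑ i, A i (ceDa (fun u w => ⁅u, w⁆) (fun u n => ⁅u, n⁆) (θ i) v)
        + ∑ m : Fin (p + 1), (-1 : ℤ) ^ (m : ℕ) •
            ∑ i, ⁅LieModule.toEnd ℝ k N (v m), A i⁆ (θ i (m.removeNth v)) := by
  simp only [ceDa, lie_toEnd_apply, map_add, map_sum, map_zsmul, apply_dite (A _), map_zero,
    lie_sum, Finset.sum_sub_distrib, smul_sub, Finset.smul_sum, Finset.sum_add_distrib]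
  rw [Finset.sum_comm (s := Finset.univ (α := ι))]
  conv_rhs => enter [1, 2]; rw [Finset.sum_comm]; enter [2, m]; rw [Finset.sum_comm]
  simp only [Finset.sum_dite_irrel, Finset.sum_const_zero]
  abel

theorem sum_lie_toEnd_apply_eq_sum_apply_lie {ι : Type*} [Fintype ι] (b : ι → k)
    (R : ι → Module.End ℝ N) (x : k)
    (hx : (∑ i, ⁅LieModule.toEnd ℝ k N x, R i⁆ ⊗ₜ[ℝ] b i) + ∑ i, R i ⊗ₜ[ℝ] ⁅x, b i⁆
      = (0 : Module.End ℝ N ⊗[ℝ] k))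
    (L : k →ₗ[ℝ] N) :
    ∑ i, ⁅LieModule.toEnd ℝ k N x, R i⁆ (L (b i)) = ∑ i, R i (L ⁅b i, x⁆) := by
  have := congrArg (TensorProduct.lift (LinearMap.lcomp ℝ N L)) hx
  simp only [map_add, map_sum, TensorProduct.lift.tmul, LinearMap.lcomp_apply, map_zero] at this
  rw [eq_neg_of_add_eq_zero_left this, ← Finset.sum_neg_distrib]
  simp only [← lie_skew x, map_neg, neg_neg]

theorem sum_apply_lie_eq_ceDa_ceIota_add_ceIota_ceDa {ι : Type*} [Fintype ι] (b : ι → k)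
    (R : ι → Module.End ℝ N) {p : ℕ} (ω : MultilinearMap ℝ (fun _ : Fin (p + 1) => k) N)
    (η : Fin (p + 1) → k)
    (hη : ∀ m, (∑ i, ⁅LieModule.toEnd ℝ k N (η m), R i⁆ ⊗ₜ[ℝ] b i) + ∑ i, R i ⊗ₜ[ℝ] ⁅η m, b i⁆
      = (0 : Module.End ℝ N ⊗[ℝ] k)) :
    ∑ i, R i ⁅b i, ω η⁆
      = ceDa (fun u v => ⁅u, v⁆) (fun u n => ⁅u, n⁆) (ceIota R b ω) η
        + ceIota R b (ceDa (fun u v => ⁅u, v⁆) (fun u n => ⁅u, n⁆) ω) η := by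
  have hinv : ∀ m : Fin (p + 1),
      ∑ i, ⁅LieModule.toEnd ℝ k N (η m), R i⁆ (ω (Fin.cons (b i) (m.removeNth η)))
        = ∑ i, R i (ω (Fin.cons ⁅b i, η m⁆ (m.removeNth η))) := fun m => by
    simpa only [MultilinearMap.toLinearMap_apply, Fin.update_cons_zero] using
      sum_lie_toEnd_apply_eq_sum_apply_lie b R (η m) (hη m)
        (ω.toLinearMap (Fin.cons 0 (m.removeNth η)) 0)
  rw [show ceIota R b ω = fun u => ∑ i, R i (ω (Fin.cons (b i) u)) from rfl, ceDa_sum_comp]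
  simp only [ceIota, ceDa_cons, hinv, map_sub, map_sum, map_zsmul, Finset.sum_sub_distrib,
    Finset.smul_sum]
  rw [Finset.sum_comm (s := Finset.univ (α := ι))]
  abel

end LieModule

theorem stmt8_general {g k N : Type*}
    [LieRing g] [LieAlgebra ℝ g] [LieRing k] [LieAlgebra ℝ k]
    [AddCommGroup N] [Module ℝ N] [LieRingModule k N] [LieModule ℝ k N]
    {ι' : Type*} [Fintype ι']
    (b : Module.Basis ι' ℝ k)
    (ψ : g →ₗ⁅ℝ⁆ k)
    (R : ι' → Module.End ℝ N)
    (hinv : ∀ ξ : g,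
      ((∑ i, ⁅LieModule.toEnd ℝ k N (ψ ξ), R i⁆ ⊗ₜ[ℝ] b i)
          + ∑ i, R i ⊗ₜ[ℝ] ⁅ψ ξ, b i⁆)
        = (0 : Module.End ℝ N ⊗[ℝ] k))
    {p : ℕ} (ω : AlternatingMap ℝ k N (Fin (p + 1)))
    (ξ : Fin (p + 1) → g) :
    (∑ i, R i ⁅b i, ω fun r => ψ (ξ r)⁆)
      = ceDa (fun u v => ⁅u, v⁆) (fun u n => ⁅u, n⁆)
          (ceIota R (fun i => b i) ⇑ω) (fun r => ψ (ξ r))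
        + ceIota R (fun i => b i) (ceDa (fun u v => ⁅u, v⁆) (fun u n => ⁅u, n⁆) ⇑ω)
            (fun r => ψ (ξ r)) :=
  sum_apply_lie_eq_ceDa_ceIota_add_ceIota_ceDa (fun i => b i) R ω.toMultilinearMap _
    fun m => hinv (ξ m)

/-- The homotopy formula in Lie algebra cohomology: for a Lie algebra homomorphism
`ψ : g → k`, a `k`-module `N`, and a `g`-invariant element `R = Σ_i R^i ⊗ f_i ∈ End(N) ⊗ k`
(written w.r.t. a basis `b` of `k`), the chain map `V(R) ⊗ ψ*` with
`V(R) = Σ_i R^i ∘ L^N(f_i)` satisfies `V(R) ⊗ ψ* = (1 ⊗ ψ*) ∘ [d, ι(R)]`; in particular it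
is chain homotopic to zero.  Stated on an alternating cochain `ω ∈ C^{p+1}(k,N)` evaluated
on `ψ∘ξ`. -/
theorem stmt8 {g k N : Type*}
    [LieRing g] [LieAlgebra ℝ g] [LieRing k] [LieAlgebra ℝ k]
    [AddCommGroup N] [Module ℝ N] [LieRingModule k N] [LieModule ℝ k N]
    {ι' : Type*} [Fintype ι'] [DecidableEq ι']
    (b : Module.Basis ι' ℝ k)
    (ψ : g →ₗ⁅ℝ⁆ k)
    (R : ι' → Module.End ℝ N)
    (hinv : ∀ ξ : g,
      ((∑ i, ⁅LieModule.toEnd ℝ k N (ψ ξ), R i⁆ ⊗ₜ[ℝ] b i)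
          + ∑ i, R i ⊗ₜ[ℝ] ⁅ψ ξ, b i⁆)
        = (0 : Module.End ℝ N ⊗[ℝ] k))
    {p : ℕ} (ω : AlternatingMap ℝ k N (Fin (p + 1)))
    (ξ : Fin (p + 1) → g) :
    (∑ i, R i ⁅b i, ω fun r => ψ (ξ r)⁆)
      = ceDa (fun u v => ⁅u, v⁆) (fun u n => ⁅u, n⁆)
          (ceIota R (fun i => b i) ⇑ω) (fun r => ψ (ξ r))
        + ceIota R (fun i => b i) (ceDa (fun u v => ⁅u, v⁆) (fun u n => ⁅u, n⁆) ⇑ω)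
            (fun r => ψ (ξ r)) :=
  stmt8_general b ψ R hinv ω ξ
end
end

section
/- With notation as in the Lie algebra k_M = C^∞(M,k) acting on distributions on M, define the first-order operator V(β) = Σ_i β^i ∘ L(e_i) on distributions (where β = Σ_i β^i e_i, (e_i) a basis of k, and L(e_i) the Lie derivative for the k-action). Define τ: k_M → C^∞(M) by τ(β) = Σ_i L_i(β^i). Then L(X^β) − V(β) = τ(β) (as operators, τ(β) acting by multiplication), τ is a 1-cocycle: τ([β,γ]) = L(X^β)τ(γ) − L(X^γ)τ(β), and consequently V([β,γ]) = [V(β), V(γ)]. -/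
attribute [local instance] LieRing.ofAssociativeRing

/-! Since `L` is a Lie algebra action, `V(β) V(γ) − V(γ) V(β)` is `V` applied to the first-order
terms `L(X^β)γ − L(X^γ)β` plus `Σ β^i γ^{i'} [L_i, L_{i'}] = V(Σ β^i γ^{i'} [e_i, e_{i'}])`, which
is `V([β,γ])`.  The cocycle identity is the same computation for the derivations `a_i` on `A`:
in `τ([β,γ])` the second-order terms give commutators `[a_i, a_j] = a([e_i, e_j])` that cancel the
structure-constant part of the bracket, and the remaining cross terms `Σ a_i γ^j · a_j β^i` are
symmetric in `β, γ`. -/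

open Finset

namespace ActionAlgebroid

variable {R A k ι : Type*} [CommRing R] [CommRing A] [Algebra R A] [LieRing k] [LieAlgebra R k]
  [Fintype ι] (b : Module.Basis ι R k) (a : k →ₗ⁅R⁆ Derivation R A A)

-- In the paper's notation `fieldDeriv β` is `L(X^β)` on functions, `divergence` is `τ`,
-- `fieldOp` is `V`, and `modBracket` is the bracket of `k_M` in coordinates, whose
-- `[β(x), γ(x)]_k` part is `structTerm`.
noncomputable def fieldDeriv (β : ι → A) (f : A) : A := ∑ i, β i * a (b i) f

noncomputable def divergence (β : ι → A) : A := ∑ j, a (b j) (β j)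

noncomputable def structTerm (β γ : ι → A) (j : ι) : A :=
  ∑ i, ∑ i', β i * γ i' * algebraMap R A (b.repr ⁅b i, b i'⁆ j)

noncomputable def modBracket (β γ : ι → A) (j : ι) : A :=
  fieldDeriv b a β (γ j) - fieldDeriv b a γ (β j) + structTerm b β γ j

theorem derivation_apply_eq_sum_repr (ξ : k) (f : A) :
    a ξ f = ∑ j, b.repr ξ j • a (b j) f := by
  conv_lhs => rw [← b.sum_repr ξ, map_sum, ← Derivation.coeFnAddMonoidHom_apply, map_sum]
  simp only [Finset.sum_apply, map_smul]
  rfl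

theorem divergence_fieldDeriv (β γ : ι → A) :
    divergence b a (fun j => fieldDeriv b a β (γ j))
      = fieldDeriv b a β (divergence b a γ) + ∑ j, ∑ i, a (b i) (γ j) * a (b j) (β i)
        - ∑ j, ∑ i, β i * a ⁅b i, b j⁆ (γ j) := by
  have hcomm : ∀ i j, a (b j) (a (b i) (γ j)) = a (b i) (a (b j) (γ j)) - a ⁅b i, b j⁆ (γ j) := by
    intro i j
    rw [a.map_lie, Derivation.commutator_apply, sub_sub_cancel]
  simp only [divergence, fieldDeriv, map_sum, Derivation.leibniz, smul_eq_mul, hcomm, mul_sub,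
    mul_sum, sum_add_distrib, sum_sub_distrib]
  rw [sum_comm]
  abel

theorem divergence_structTerm (β γ : ι → A) :
    divergence b a (structTerm b β γ)
      = ∑ j, ∑ i, β i * a ⁅b i, b j⁆ (γ j) - ∑ j, ∑ i, γ i * a ⁅b i, b j⁆ (β j) := by
  have hexpand : divergence b a (structTerm b β γ) = ∑ i, ∑ j, a ⁅b i, b j⁆ (β i * γ j) := by
    simp only [divergence, structTerm, derivation_apply_eq_sum_repr b a ⁅_, _⁆, ← Algebra.commutes,
      ← Algebra.smul_def, map_sum, Derivation.map_smul]
    rw [sum_comm]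
    exact sum_congr rfl fun _ _ => sum_comm
  have hskew : ∑ i, ∑ j, γ j * a ⁅b i, b j⁆ (β i) = -∑ i, ∑ j, γ j * a ⁅b j, b i⁆ (β i) := by
    simp only [← sum_neg_distrib, ← mul_neg]
    refine sum_congr rfl fun i _ => sum_congr rfl fun j _ => ?_
    rw [← Derivation.neg_apply, ← map_neg, lie_skew]
  rw [hexpand]
  simp only [Derivation.leibniz, smul_eq_mul, sum_add_distrib]
  rw [hskew, sum_comm, sub_eq_add_neg]

theorem divergence_modBracket (β γ : ι → A) :
    divergence b a (modBracket b a β γ)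
      = fieldDeriv b a β (divergence b a γ) - fieldDeriv b a γ (divergence b a β) := by
  have hlin : divergence b a (modBracket b a β γ)
      = divergence b a (fun j => fieldDeriv b a β (γ j))
        - divergence b a (fun j => fieldDeriv b a γ (β j)) + divergence b a (structTerm b β γ) := by
    simp only [divergence, modBracket, map_add, map_sub, sum_add_distrib, sum_sub_distrib]
  have hcross : ∑ j, ∑ i, a (b i) (γ j) * a (b j) (β i)
      = ∑ j, ∑ i, a (b i) (β j) * a (b j) (γ i) := by
    rw [sum_comm]
    exact sum_congr rfl fun _ _ => sum_congr rfl fun _ _ => mul_comm _ _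
  rw [hlin, divergence_fieldDeriv, divergence_fieldDeriv, divergence_structTerm, hcross]
  abel

section Distributions

variable {D : Type*} [AddCommGroup D] [Module R D] [Module A D]

noncomputable def fieldOp (L : k →ₗ⁅R⁆ Module.End R D) (β : ι → A) (u : D) : D :=
  ∑ i, β i • L (b i) u

theorem lie_apply_eq_sum_repr (L : k →ₗ⁅R⁆ Module.End R D) (ξ : k) (u : D) :
    L ξ u = ∑ j, b.repr ξ j • L (b j) u := by
  conv_lhs => rw [← b.sum_repr ξ, map_sum]
  simp only [map_smul, LinearMap.coe_sum, LinearMap.coe_smul, Finset.sum_apply, Pi.smul_apply]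

theorem fieldOp_structTerm [IsScalarTower R A D] (L : k →ₗ⁅R⁆ Module.End R D) (β γ : ι → A)
    (u : D) :
    fieldOp b L (structTerm b β γ) u
      = ∑ i, ∑ i', (β i * γ i') • (L (b i) (L (b i') u) - L (b i') (L (b i) u)) := by
  have hcomm : ∀ i i', L (b i) (L (b i') u) - L (b i') (L (b i) u) = L ⁅b i, b i'⁆ u := by
    intro i i'
    rw [L.map_lie, Ring.lie_def, LinearMap.sub_apply, Module.End.mul_apply, Module.End.mul_apply]
  simp only [hcomm, lie_apply_eq_sum_repr b L ⁅_, _⁆ u, fieldOp, structTerm, sum_smul, smul_sum,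
    mul_smul, algebraMap_smul]
  rw [sum_comm]
  exact sum_congr rfl fun _ _ => sum_comm

variable {a} {L : k →ₗ⁅R⁆ Module.End R D}
  (hLeib : ∀ (ξ : k) (f : A) (u : D), L ξ (f • u) = a ξ f • u + f • L ξ u)
include hLeib

theorem sum_lie_smul_sub_fieldOp (β : ι → A) (u : D) :
    ∑ i, L (b i) (β i • u) - fieldOp b L β u = divergence b a β • u := by
  simp only [hLeib, sum_add_distrib, fieldOp, divergence, sum_smul, add_sub_cancel_right]

theorem fieldOp_fieldOp (β γ : ι → A) (u : D) :
    fieldOp b L β (fieldOp b L γ u) = fieldOp b L (fun j => fieldDeriv b a β (γ j)) u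
      + ∑ i, ∑ i', (β i * γ i') • L (b i) (L (b i') u) := by
  simp only [fieldOp, fieldDeriv, map_sum, hLeib, smul_add, smul_sum, sum_add_distrib,
    sum_smul, smul_smul]
  rw [sum_comm]

theorem fieldOp_modBracket [IsScalarTower R A D] (β γ : ι → A) (u : D) :
    fieldOp b L (modBracket b a β γ) u
      = fieldOp b L β (fieldOp b L γ u) - fieldOp b L γ (fieldOp b L β u) := by
  have hswap : ∑ i, ∑ i', (γ i * β i') • L (b i) (L (b i') u)
      = ∑ i, ∑ i', (β i * γ i') • L (b i') (L (b i) u) := by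
    rw [sum_comm]
    simp only [mul_comm]
  have hlin : fieldOp b L (modBracket b a β γ) u
      = fieldOp b L (fun j => fieldDeriv b a β (γ j)) u
        - fieldOp b L (fun j => fieldDeriv b a γ (β j)) u + fieldOp b L (structTerm b β γ) u := by
    simp only [fieldOp, modBracket, add_smul, sub_smul, sum_add_distrib, sum_sub_distrib]
  rw [hlin, fieldOp_fieldOp b hLeib, fieldOp_fieldOp b hLeib, hswap, fieldOp_structTerm]
  simp only [smul_sub, sum_sub_distrib]
  abel

end Distributions
end ActionAlgebroid

theorem stmt9_general {A : Type*} [CommRing A] [Algebra ℝ A]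
    {k : Type*} [LieRing k] [LieAlgebra ℝ k]
    {ι : Type*} [Fintype ι]
    (b : Module.Basis ι ℝ k)
    (a : k →ₗ⁅ℝ⁆ Derivation ℝ A A)
    {Dst : Type*} [AddCommGroup Dst] [Module ℝ Dst] [Module A Dst]
    [IsScalarTower ℝ A Dst]
    (L : k →ₗ⁅ℝ⁆ Module.End ℝ Dst)
    (hLeib : ∀ (ξ : k) (f : A) (u : Dst), L ξ (f • u) = (a ξ f) • u + f • L ξ u)
    (β γ : ι → A)
    -- the modified bracket `[β,γ]`, in coordinates:
    (brc : ι → A)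
    (hbrc : ∀ j, brc j = (∑ i, β i * (a (b i)) (γ j)) - (∑ i, γ i * (a (b i)) (β j))
        + ∑ i, ∑ i', β i * γ i' * algebraMap ℝ A (b.repr ⁅b i, b i'⁆ j)) :
    (∀ u : Dst, (∑ i, L (b i) (β i • u)) - (∑ i, β i • L (b i) u)
        = (∑ i, a (b i) (β i)) • u) ∧
    ((∑ j, a (b j) (brc j))
        = (∑ i, β i * a (b i) (∑ j, a (b j) (γ j)))
          - (∑ i, γ i * a (b i) (∑ j, a (b j) (β j)))) ∧
    (∀ u : Dst, (∑ i, brc i • L (b i) u)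
        = (∑ i, β i • L (b i) (∑ i', γ i' • L (b i') u))
          - (∑ i, γ i • L (b i) (∑ i', β i' • L (b i') u))) := by
  obtain rfl : brc = ActionAlgebroid.modBracket b a β γ := funext hbrc
  exact ⟨ActionAlgebroid.sum_lie_smul_sub_fieldOp b hLeib β,
    ActionAlgebroid.divergence_modBracket b a β γ,
    ActionAlgebroid.fieldOp_modBracket b hLeib β γ⟩

/-- Algebraic model of the cocycle `τ`.  `A = C^∞(M)` is the algebra of functions, the Lie
algebra `k` acts on `M` via derivations `a : k → Der(A)`, and `Dst` is the space of
distributions on `M`: an `A`-module with Lie derivatives `L : k → End(Dst)` (a Lie algebra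
action) satisfying the Leibniz rule.  For `β = Σ_i β^i e_i ∈ C^∞(M,k)` (coordinates
`β : ι → A` w.r.t. a basis `b` of `k`), set `V(β)u = Σ_i β^i • L_i u`,
`L(X^β)u = Σ_i L_i (β^i • u)`, and `τ(β) = Σ_i L_i β^i ∈ A`.  Then:
(1) `L(X^β) − V(β) = τ(β)` (multiplication operator);
(2) `τ` is a 1-cocycle: `τ([β,γ]) = L(X^β)τ(γ) − L(X^γ)τ(β)`;
(3) `V([β,γ]) = [V(β),V(γ)]`,
where `[β,γ]` is the modified bracket (written in coordinates). -/
theorem stmt9 {A : Type*} [CommRing A] [Algebra ℝ A]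
    {k : Type*} [LieRing k] [LieAlgebra ℝ k]
    {ι : Type*} [Fintype ι] [DecidableEq ι]
    (b : Module.Basis ι ℝ k)
    (a : k →ₗ⁅ℝ⁆ Derivation ℝ A A)
    {Dst : Type*} [AddCommGroup Dst] [Module ℝ Dst] [Module A Dst]
    [IsScalarTower ℝ A Dst]
    (L : k →ₗ⁅ℝ⁆ Module.End ℝ Dst)
    (hLeib : ∀ (ξ : k) (f : A) (u : Dst), L ξ (f • u) = (a ξ f) • u + f • L ξ u)
    (β γ : ι → A)
    -- the modified bracket `[β,γ]`, in coordinates: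
    (brc : ι → A)
    (hbrc : ∀ j, brc j = (∑ i, β i * (a (b i)) (γ j)) - (∑ i, γ i * (a (b i)) (β j))
        + ∑ i, ∑ i', β i * γ i' * algebraMap ℝ A (b.repr ⁅b i, b i'⁆ j)) :
    (∀ u : Dst, (∑ i, L (b i) (β i • u)) - (∑ i, β i • L (b i) u)
        = (∑ i, a (b i) (β i)) • u) ∧
    ((∑ j, a (b j) (brc j))
        = (∑ i, β i * a (b i) (∑ j, a (b j) (γ j)))
          - (∑ i, γ i * a (b i) (∑ j, a (b j) (β j)))) ∧
    (∀ u : Dst, (∑ i, brc i • L (b i) u)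
        = (∑ i, β i • L (b i) (∑ i', γ i' • L (b i') u))
          - (∑ i, γ i • L (b i) (∑ i', β i' • L (b i') u))) :=
  stmt9_general b a L hLeib β γ brc hbrc
end
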